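/- Let P ⊆ S^{N−1} be a finite root system in ℝ^N (N ≥ 1) satisfying condition (EA), let ρ ≥ 0 and 0 < r, R. Then there exists a constant c > 0, depending only on N, P, ρ, r and R, such that for every open set Ω ⊆ ℝ^N satisfying the reflection property (RP) with respect to P and ρ, containing the open ball 𝔅_r of radius σ1(P)⁻¹σ2(P)(ρ + 2r) about the origin, and contained in B(0, R), one has λ({x ∈ ℝ^N : 0 < dist(x, Ω) < s}) ≤ c·s for all s ∈ (0, r), where λ denotes Lebesgue measure and dist(x, Ω) the Euclidean distance from x to Ω. -/

import Mathlib

open scoped RealInnerProductSpace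
open Metric Set MeasureTheory

noncomputable section

abbrev E (N : ℕ) := EuclideanSpace ℝ (Fin N)

variable {N : ℕ}

/-- Reflection across the hyperplane `Π_p(s) = {x | x·p = s}`. -/
def reflect (p : E N) (s : ℝ) (x : E N) : E N := x - (2 * (⟪x, p⟫ - s)) • p

/-- Reflection across the hyperplane through the origin orthogonal to `p`. -/
def reflect0 (p : E N) : E N → E N := reflect p 0

/-- A finite root system of unit vectors. -/
def IsRootSystem (P : Set (E N)) : Prop :=
  P.Finite ∧ (∀ p ∈ P, ‖p‖ = 1) ∧
  (∀ p ∈ P, {q | q ∈ P ∧ ∃ c : ℝ, q = c • p} = {p, -p}) ∧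
  (∀ p ∈ P, reflect0 p '' P = P)

/-- Condition (EA): for every hyperplane through the origin (with normal `v ≠ 0`),
the part of `P` outside the hyperplane spans `ℝ^N`. -/
def CondEA (P : Set (E N)) : Prop :=
  ∀ v : E N, v ≠ 0 → Submodule.span ℝ {p | p ∈ P ∧ ⟪p, v⟫ ≠ 0} = ⊤

/-- The reflection property (RP) with respect to `P` and `ρ`. -/
def ReflProp (P : Set (E N)) (ρ : ℝ) (Ω : Set (E N)) : Prop :=
  ∀ p ∈ P, ∀ s > ρ,
    reflect p s '' Ω ∩ {x | ⟪x, p⟫ < s} ⊆ Ω ∩ {x | ⟪x, p⟫ < s}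

/-- `v` enumerates a basis of `ℝ^N` consisting of elements of `P`. -/
def BasisIn (P : Set (E N)) (v : Fin N → E N) : Prop :=
  (∀ i, v i ∈ P) ∧ LinearIndependent ℝ v ∧ Submodule.span ℝ (Set.range v) = ⊤

/-- The open cone `Co_r(A)` generated by a basis. -/
def Cone (r : ℝ) (v : Fin N → E N) : Set (E N) :=
  {x | ∃ a : Fin N → ℝ, (∀ i, 0 < a i) ∧ (∑ i, a i) < r ∧ x = ∑ i, a i • v i}

/-- `σ₁(P)`. -/
def sigma1 (P : Set (E N)) : ℝ :=
  sInf {s | ∃ p₁ ∈ P, s = sSup {t | ∃ v : Fin N → E N, BasisIn P v ∧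
    t = sInf (Set.range fun i => |⟪v i, p₁⟫|)}}

/-- `σ₂(P)`. -/
def sigma2 (P : Set (E N)) : ℝ :=
  sSup {t | ∃ x : E N, (∀ p ∈ P, |⟪p, x⟫| ≤ 1) ∧ t = ‖x‖}

/-- `σ₃(P)`. -/
def sigma3 (P : Set (E N)) : ℝ :=
  sInf {s | ∃ v : Fin N → E N, BasisIn P v ∧
    s = sSup {r | 0 < r ∧ ball ((1 / (2 * (N : ℝ))) • ∑ i, v i) r ⊆ Cone 1 v}}

/-!
A point `x` of the outer neighbourhood lies outside `Ω ⊇ 𝔅_r`. Let `p₁` be the root maximising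
`⟪p, x⟫`, so that `‖x‖ ≤ σ₂ ⟪p₁, x⟫`, and take a basis of roots `v` with `|⟪v i, p₁⟫| ≥ σ₁`.
Replacing `± v i` by its reflection `2⟪q, p₁⟫ p₁ - q` where necessary shows that the roots `q` with
`⟪q, x⟫ ≥ σ₁ ⟪p₁, x⟫ ≥ ρ + 2r` span `ℝ^N`. So `x` lies in one of finitely many regions
`{x | ⟪b i, x⟫ ≥ ρ + 2r}` attached to a basis `b` of roots. There (RP) pushes points of `Ω` down
along every `b i`: if `x` is within `s` of `Ω`, then `x - τ ∑ b i ∈ Ω` for all `τ` between `C s`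
and about `r / N`, `C` bounding the coordinates in the basis `b`. Hence about `r / s` translates
of the region's part of the neighbourhood by multiples of `C s ∑ b i` are pairwise disjoint, and
they all lie in a fixed ball.
-/

open scoped ENNReal

section Translates

variable {G : Type*} [AddCommGroup G] [MeasurableSpace G] [MeasurableAdd G]

theorem natCast_mul_measure_le_of_translates (μ : Measure G) [μ.IsAddRightInvariant]
    {S B : Set G} (hS : MeasurableSet S) (v : G) (n : ℕ)
    (hdisj : ∀ x ∈ S, ∀ m : ℕ, 0 < m → m < n → x - m • v ∉ S)
    (hB : ∀ x ∈ S, ∀ k < n, x - k • v ∈ B) :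
    n * μ S ≤ μ B := by
  set T : ℕ → Set G := fun k => (· + k • v) ⁻¹' S
  have hT : ∀ k k', k < k' → k' < n → Disjoint (T k) (T k') := fun k k' hkk' hk' =>
    Set.disjoint_left.2 fun y hy hy' => hdisj _ hy' (k' - k) (by omega) (by omega) <| by
      simpa [T, sub_nsmul v hkk'.le, add_sub_assoc] using hy
  have hT_disj : (Finset.range n : Set ℕ).PairwiseDisjoint T := by
    intro k hk k' hk' hne
    simp only [Finset.coe_range, mem_Iio] at hk hk'
    rcases hne.lt_or_gt with h | h
    exacts [hT k k' h hk', (hT k' k h hk).symm]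
  calc (n : ℝ≥0∞) * μ S = ∑ k ∈ Finset.range n, μ (T k) := by
        simp [T, measure_preimage_add_right]
    _ = μ (⋃ k ∈ Finset.range n, T k) :=
        (measure_biUnion_finset hT_disj fun k _ => hS.preimage (measurable_add_const _)).symm
    _ ≤ μ B := measure_mono <| iUnion₂_subset fun k hk y hy => by
        simpa using hB _ hy k (Finset.mem_range.1 hk)

end Translates

theorem le_ofReal_two_mul_mul {a b : ℝ≥0∞} {κ : ℝ} (hκ : 0 < κ) (hab : a ≤ b)
    (h : ∀ n : ℕ, n * κ ≤ 1 → n * a ≤ b) : a ≤ ENNReal.ofReal (2 * κ) * b := by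
  set n := ⌊κ⁻¹⌋₊
  rcases Nat.eq_zero_or_pos n with hn | hn
  · have : 1 < κ := (inv_lt_one₀ hκ).1 (Nat.floor_eq_zero.1 hn)
    calc a ≤ 1 * b := by rwa [one_mul]
      _ ≤ ENNReal.ofReal (2 * κ) * b := by gcongr; exact ENNReal.one_le_ofReal.2 (by linarith)
  · have hnκ : n * κ ≤ 1 := by
      simpa [hκ.ne'] using mul_le_mul_of_nonneg_right (Nat.floor_le (inv_pos.2 hκ).le) hκ.le
    have h2nκ : 1 ≤ 2 * κ * n := by
      have := Nat.lt_floor_add_one κ⁻¹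
      have hn1 : (1 : ℝ) ≤ n := by exact_mod_cast hn
      rw [inv_lt_iff_one_lt_mul₀ hκ] at this
      nlinarith
    calc a = 1 * a := (one_mul a).symm
      _ ≤ ENNReal.ofReal (2 * κ * n) * a := by gcongr; exact ENNReal.one_le_ofReal.2 h2nκ
      _ = ENNReal.ofReal (2 * κ) * (n * a) := by
        rw [ENNReal.ofReal_mul (by positivity), ENNReal.ofReal_natCast, mul_assoc]
      _ ≤ ENNReal.ofReal (2 * κ) * b := by gcongr; exact h n hnκ

theorem exists_abs_equivFun_le {ι F : Type*} [Fintype ι] [NormedAddCommGroup F]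
    [NormedSpace ℝ F] [FiniteDimensional ℝ F] (b : Module.Basis ι ℝ F) :
    ∃ C > 0, ∀ z i, |b.equivFun z i| ≤ C * ‖z‖ := by
  set L := (b.equivFunL : F →L[ℝ] ι → ℝ)
  refine ⟨‖L‖ + 1, by positivity, fun z i => ?_⟩
  calc |b.equivFun z i| ≤ ‖L z‖ := norm_le_pi_norm (L z) i
    _ ≤ ‖L‖ * ‖z‖ := L.le_opNorm z
    _ ≤ (‖L‖ + 1) * ‖z‖ := by gcongr; linarith

section OuterNbhd

variable {α : Type*} [PseudoMetricSpace α]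

def outerNbhd (Ω : Set α) (s : ℝ) : Set α := {x | 0 < infDist x Ω ∧ infDist x Ω < s}

theorem isOpen_outerNbhd (Ω : Set α) (s : ℝ) : IsOpen (outerNbhd Ω s) :=
  isOpen_Ioo.preimage (continuous_infDist_pt Ω)

theorem notMem_of_mem_outerNbhd {Ω : Set α} {s : ℝ} {x : α} (hx : x ∈ outerNbhd Ω s) :
    x ∉ Ω := fun h => hx.1.ne' (infDist_zero_of_mem h)

theorem exists_dist_lt_of_mem_outerNbhd {Ω : Set α} {s : ℝ} {x : α} (hx : x ∈ outerNbhd Ω s) :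
    ∃ ω ∈ Ω, dist x ω < s := by
  have hΩ : Ω.Nonempty := nonempty_iff_ne_empty.2 fun h => by simp [h, outerNbhd] at hx
  exact (infDist_lt_iff hΩ).1 hx.2

theorem outerNbhd_subset_ball {Ω : Set α} {s R : ℝ} {c : α} (hΩ : Ω ⊆ ball c R) :
    outerNbhd Ω s ⊆ ball c (R + s) := fun x hx => by
  obtain ⟨ω, hω, hxω⟩ := exists_dist_lt_of_mem_outerNbhd hx
  have := hΩ hω
  rw [mem_ball] at this ⊢
  linarith [dist_triangle x ω c]

end OuterNbhd

section RootSystem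

variable {P : Set (E N)}

theorem IsRootSystem.neg_mem (hP : IsRootSystem P) {p : E N} (hp : p ∈ P) : -p ∈ P := by
  have h : -p ∈ ({p, -p} : Set (E N)) := by simp
  rw [← hP.2.2.1 p hp] at h
  exact h.1

theorem IsRootSystem.reflect0_mem (hP : IsRootSystem P) {p q : E N} (hp : p ∈ P)
    (hq : q ∈ P) : reflect0 p q ∈ P :=
  hP.2.2.2 p hp ▸ mem_image_of_mem _ hq

theorem CondEA.exists_inner_ne_zero (hEA : CondEA P) {x : E N} (hx : x ≠ 0) :
    ∃ p ∈ P, ⟪p, x⟫ ≠ 0 := by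
  by_contra! h
  have hempty : {p | p ∈ P ∧ ⟪p, x⟫ ≠ 0} = ∅ :=
    eq_empty_of_forall_notMem fun p hp => hp.2 (h p hp.1)
  have := hEA x hx
  rw [hempty, Submodule.span_empty] at this
  exact hx (Submodule.mem_bot ℝ |>.1 (this ▸ Submodule.mem_top))

theorem IsRootSystem.exists_inner_pos (hP : IsRootSystem P) (hEA : CondEA P) {x : E N}
    (hx : x ≠ 0) : ∃ p ∈ P, 0 < ⟪p, x⟫ := by
  obtain ⟨p, hp, hpx⟩ := hEA.exists_inner_ne_zero hx
  rcases hpx.lt_or_gt with h | h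
  · exact ⟨-p, hP.neg_mem hp, by rw [inner_neg_left]; linarith⟩
  · exact ⟨p, hp, h⟩

theorem exists_ne_zero_of_one_le (hN : 1 ≤ N) : ∃ x : E N, x ≠ 0 := by
  have : Nonempty (Fin N) := ⟨⟨0, hN⟩⟩
  exact exists_ne 0

theorem CondEA.span_eq_top (hN : 1 ≤ N) (hEA : CondEA P) : Submodule.span ℝ P = ⊤ := by
  obtain ⟨x, hx⟩ := exists_ne_zero_of_one_le hN
  exact top_le_iff.1 <| hEA x hx ▸ Submodule.span_mono fun p hp => hp.1

theorem CondEA.nonempty (hN : 1 ≤ N) (hEA : CondEA P) : P.Nonempty := by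
  obtain ⟨x, hx⟩ := exists_ne_zero_of_one_le hN
  obtain ⟨p, hp, -⟩ := hEA.exists_inner_ne_zero hx
  exact ⟨p, hp⟩

theorem exists_basis_forall_mem {A : Set (E N)} (hA : Submodule.span ℝ A = ⊤) :
    ∃ b : Module.Basis (Fin N) ℝ (E N), ∀ i, b i ∈ A := by
  set b := Module.Basis.ofSpan hA.ge
  refine ⟨b.reindex (b.indexEquiv (EuclideanSpace.basisFun (Fin N) ℝ).toBasis), fun i => ?_⟩
  rw [Module.Basis.reindex_apply]
  exact Module.Basis.ofSpan_subset hA.ge (mem_range_self _)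

theorem Module.Basis.basisIn {b : Module.Basis (Fin N) ℝ (E N)} (hb : ∀ i, b i ∈ P) :
    BasisIn P b :=
  ⟨hb, b.linearIndependent, b.span_eq⟩

end RootSystem

section ReflectionProperty

variable {P : Set (E N)} {ρ : ℝ} {Ω : Set (E N)}

theorem ReflProp.sub_smul_mem (hRP : ReflProp P ρ Ω) {p : E N} (hp : p ∈ P) (hpn : ‖p‖ = 1)
    {ω : E N} (hω : ω ∈ Ω) {t : ℝ} (ht : 0 ≤ t) (hlt : ρ + t / 2 < ⟪ω, p⟫) :
    ω - t • p ∈ Ω := by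
  rcases ht.eq_or_lt with rfl | ht
  · simpa using hω
  have hpp : ⟪p, p⟫ = (1 : ℝ) := by rw [real_inner_self_eq_norm_sq, hpn, one_pow]
  -- reflect in the hyperplane halfway between `ω` and `ω - t • p`
  have hrefl : reflect p (⟪ω, p⟫ - t / 2) ω = ω - t • p := by
    unfold reflect
    congr 2
    ring
  have hbelow : ⟪ω - t • p, p⟫ < ⟪ω, p⟫ - t / 2 := by
    rw [inner_sub_left, real_inner_smul_left, hpp]
    linarith
  exact (hRP p hp _ (by linarith) ⟨⟨ω, hω, hrefl⟩, hbelow⟩).1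

theorem ReflProp.sub_sum_smul_mem (hRP : ReflProp P ρ Ω) (hunit : ∀ p ∈ P, ‖p‖ = 1)
    {ι : Type*} {u : ι → E N} (hu : ∀ i, u i ∈ P) {t : ι → ℝ} (ht : ∀ i, 0 ≤ t i)
    (F : Finset ι) {ω : E N} (hω : ω ∈ Ω) (hlt : ∀ j ∈ F, ρ + ∑ i ∈ F, t i < ⟪ω, u j⟫) :
    ω - ∑ i ∈ F, t i • u i ∈ Ω := by
  classical
  induction F using Finset.induction_on generalizing ω with
  | empty => simpa using hω
  | insert i F hi ih =>
    simp only [Finset.sum_insert hi] at hlt ⊢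
    have hF : 0 ≤ ∑ j ∈ F, t j := Finset.sum_nonneg fun j _ => ht j
    have hω' : ω - t i • u i ∈ Ω := hRP.sub_smul_mem (hu i) (hunit _ (hu i)) hω (ht i) <| by
      linarith [hlt i (Finset.mem_insert_self i F), ht i]
    rw [← sub_sub]
    refine ih hω' fun j hj => ?_
    have hij : ⟪u i, u j⟫ ≤ 1 := by
      simpa [hunit _ (hu i), hunit _ (hu j)] using real_inner_le_norm (u i) (u j)
    rw [inner_sub_left, real_inner_smul_left]
    nlinarith [hlt j (Finset.mem_insert_of_mem hj), mul_le_of_le_one_right (ht i) hij]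

end ReflectionProperty

section Volume

variable {P : Set (E N)} {ρ : ℝ} {Ω : Set (E N)} {ι : Type*} [Fintype ι]

theorem ReflProp.sub_smul_sum_basis_mem (hRP : ReflProp P ρ Ω) (hunit : ∀ p ∈ P, ‖p‖ = 1)
    {b : Module.Basis ι ℝ (E N)} (hb : ∀ i, b i ∈ P) {C : ℝ} (hC0 : 0 ≤ C)
    (hC : ∀ z i, |b.equivFun z i| ≤ C * ‖z‖) {x ω : E N} {s τ θ : ℝ} (hω : ω ∈ Ω)
    (hxω : dist x ω < s) (hx : ∀ i, θ ≤ ⟪b i, x⟫) (hτ : C * s ≤ τ)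
    (hθ : ρ + Fintype.card ι * (τ + C * s) + s ≤ θ) :
    x - τ • ∑ i, b i ∈ Ω := by
  set d := b.equivFun (ω - x)
  have hd : ∀ i, |d i| ≤ C * s := fun i =>
    (hC _ i).trans <| mul_le_mul_of_nonneg_left (by rw [← dist_eq_norm']; exact hxω.le) hC0
  have hdecomp : x - τ • ∑ i, b i = ω - ∑ i, (τ + d i) • b i := by
    simp only [add_smul, Finset.sum_add_distrib, ← Finset.smul_sum, d, b.sum_equivFun]
    abel
  rw [hdecomp]
  refine hRP.sub_sum_smul_mem hunit hb (fun i => by linarith [(abs_le.1 (hd i)).1]) _ hω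
    fun j _ => ?_
  have hsum : ∑ i, (τ + d i) ≤ Fintype.card ι * (τ + C * s) := by
    calc ∑ i, (τ + d i) ≤ ∑ _i : ι, (τ + C * s) :=
          Finset.sum_le_sum fun i _ => by linarith [(abs_le.1 (hd i)).2]
      _ = Fintype.card ι * (τ + C * s) := by rw [Finset.sum_const, Finset.card_univ, nsmul_eq_mul]
  have hωj : θ - s < ⟪ω, b j⟫ := by
    have hδ : |⟪ω - x, b j⟫| < s := by
      calc |⟪ω - x, b j⟫| ≤ ‖ω - x‖ * ‖b j‖ := abs_real_inner_le_norm _ _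
        _ < s := by rw [hunit _ (hb j), mul_one, ← dist_eq_norm']; exact hxω
    have : ⟪ω, b j⟫ = ⟪b j, x⟫ + ⟪ω - x, b j⟫ := by
      rw [inner_sub_left, real_inner_comm x]; ring
    linarith [hx j, (abs_lt.1 hδ).1]
  linarith

theorem measurableSet_outerNbhd_inter (b : ι → E N) (s θ : ℝ) :
    MeasurableSet (outerNbhd Ω s ∩ {x | ∀ i, θ ≤ ⟪b i, x⟫}) := by
  refine (isOpen_outerNbhd Ω s).measurableSet.inter ?_
  simp only [ofPred_forall]
  exact MeasurableSet.iInter fun i =>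
    measurableSet_le measurable_const (continuous_const.inner continuous_id).measurable

theorem ReflProp.natCast_mul_volume_le (hRP : ReflProp P ρ Ω) (hunit : ∀ p ∈ P, ‖p‖ = 1)
    {b : Module.Basis ι ℝ (E N)} (hb : ∀ i, b i ∈ P) {C : ℝ} (hC0 : 0 ≤ C)
    (hC : ∀ z i, |b.equivFun z i| ≤ C * ‖z‖) {r R : ℝ} (hΩR : Ω ⊆ ball 0 R) {s : ℝ}
    (hs : 0 < s) (hsr : s ≤ r) {n : ℕ} (hn : n * (Fintype.card ι * C * s) ≤ r) :
    n * volume (outerNbhd Ω s ∩ {x | ∀ i, ρ + 2 * r ≤ ⟪b i, x⟫})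
      ≤ volume (ball (0 : E N) (R + 2 * r)) := by
  have hsmul : ∀ k : ℕ, k • ((C * s) • ∑ i, b i) = (k * C * s) • ∑ i, b i := fun k => by
    rw [← Nat.cast_smul_eq_nsmul ℝ, smul_smul, mul_assoc]
  refine natCast_mul_measure_le_of_translates volume (measurableSet_outerNbhd_inter _ _ _)
    ((C * s) • ∑ i, b i) n ?_ ?_
  · rintro x ⟨hx, hxb⟩ m hm hmn hx'
    obtain ⟨ω, hω, hxω⟩ := exists_dist_lt_of_mem_outerNbhd hx
    have hm1 : (1 : ℝ) ≤ m := by exact_mod_cast hm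
    have hmn' : (m : ℝ) + 1 ≤ n := by exact_mod_cast hmn
    refine notMem_of_mem_outerNbhd hx'.1 ?_
    rw [hsmul]
    refine hRP.sub_smul_sum_basis_mem hunit hb hC0 hC hω hxω hxb
      (by nlinarith [mul_nonneg hC0 hs.le]) ?_
    nlinarith [mul_nonneg (mul_nonneg (Nat.cast_nonneg (Fintype.card ι)) hC0) hs.le]
  · rintro x ⟨hx, -⟩ k hk
    have hxR := outerNbhd_subset_ball hΩR hx
    have hnorm : ‖∑ i, b i‖ ≤ Fintype.card ι := by
      calc ‖∑ i, b i‖ ≤ ∑ i, ‖b i‖ := norm_sum_le _ _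
        _ = Fintype.card ι := by simp [hunit _ (hb _)]
    have hk' : (k : ℝ) ≤ n := by exact_mod_cast hk.le
    have hshift : ‖(k * C * s) • ∑ i, b i‖ ≤ r := by
      rw [norm_smul, Real.norm_of_nonneg (by positivity)]
      calc k * C * s * ‖∑ i, b i‖ ≤ k * C * s * Fintype.card ι := by gcongr
        _ ≤ n * (Fintype.card ι * C * s) := by
          have := mul_nonneg (mul_nonneg (Nat.cast_nonneg (Fintype.card ι)) hC0) hs.le
          nlinarith
        _ ≤ r := hn
    rw [mem_ball_zero_iff] at hxR ⊢
    rw [hsmul]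
    linarith [norm_sub_le x ((k * C * s) • ∑ i, b i)]

theorem ReflProp.volume_outerNbhd_inter_le [Nonempty ι] (hRP : ReflProp P ρ Ω)
    (hunit : ∀ p ∈ P, ‖p‖ = 1) {b : Module.Basis ι ℝ (E N)} (hb : ∀ i, b i ∈ P) {C : ℝ}
    (hC0 : 0 < C) (hC : ∀ z i, |b.equivFun z i| ≤ C * ‖z‖) {r R : ℝ} (hΩR : Ω ⊆ ball 0 R)
    {s : ℝ} (hs : 0 < s) (hsr : s ≤ r) :
    volume (outerNbhd Ω s ∩ {x | ∀ i, ρ + 2 * r ≤ ⟪b i, x⟫})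
      ≤ ENNReal.ofReal (2 * (Fintype.card ι * C * s / r))
        * volume (ball (0 : E N) (R + 2 * r)) := by
  have hr : 0 < r := hs.trans_le hsr
  refine le_ofReal_two_mul_mul (by positivity) ?_ fun n hn => ?_
  · refine measure_mono <| inter_subset_left.trans <| (outerNbhd_subset_ball hΩR).trans ?_
    exact ball_subset_ball (by linarith)
  · refine hRP.natCast_mul_volume_le hunit hb hC0.le hC hΩR hs hsr ?_
    rwa [← mul_div_assoc, div_le_one hr] at hn

end Volume

theorem exists_volume_outerNbhd_inter_le (hN : 1 ≤ N) {P A : Set (E N)}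
    (hunit : ∀ p ∈ P, ‖p‖ = 1) (hAP : A ⊆ P) (hA : Submodule.span ℝ A = ⊤) (ρ : ℝ) {r R : ℝ}
    (hr : 0 < r) (hR : 0 < R) :
    ∃ k > 0, ∀ Ω : Set (E N), ReflProp P ρ Ω → Ω ⊆ ball 0 R → ∀ s : ℝ, 0 < s → s < r →
      volume (outerNbhd Ω s ∩ {x | ∀ p ∈ A, ρ + 2 * r ≤ ⟪p, x⟫}) ≤ ENNReal.ofReal (k * s) := by
  have : Nonempty (Fin N) := ⟨⟨0, hN⟩⟩
  obtain ⟨b, hbA⟩ := exists_basis_forall_mem hA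
  obtain ⟨C, hC0, hC⟩ := exists_abs_equivFun_le b
  set V := (volume (ball (0 : E N) (R + 2 * r))).toReal
  have hV : volume (ball (0 : E N) (R + 2 * r)) = ENNReal.ofReal V :=
    (ENNReal.ofReal_toReal measure_ball_lt_top.ne).symm
  have hV0 : 0 < V := ENNReal.toReal_pos (measure_ball_pos volume _ (by positivity)).ne'
    measure_ball_lt_top.ne
  have hN0 : (0 : ℝ) < N := by exact_mod_cast hN
  refine ⟨2 * (N * C / r) * V, by positivity, fun Ω hRP hΩR s hs hsr => ?_⟩
  calc volume (outerNbhd Ω s ∩ {x | ∀ p ∈ A, ρ + 2 * r ≤ ⟪p, x⟫})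
      ≤ volume (outerNbhd Ω s ∩ {x | ∀ i, ρ + 2 * r ≤ ⟪b i, x⟫}) :=
        measure_mono <| inter_subset_inter_right _ fun x hx i => hx _ (hbA i)
    _ ≤ ENNReal.ofReal (2 * (Fintype.card (Fin N) * C * s / r)) * ENNReal.ofReal V :=
        hV ▸ hRP.volume_outerNbhd_inter_le hunit (fun i => hAP (hbA i)) hC0 hC hΩR hs hsr.le
    _ = ENNReal.ofReal (2 * (N * C / r) * V * s) := by
        rw [← ENNReal.ofReal_mul (by positivity), Fintype.card_fin]
        ring_nf

section Sigma

variable {P : Set (E N)}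

theorem bddAbove_sigma2 (hPfin : P.Finite) (hEA : CondEA P) :
    BddAbove {t | ∃ x : E N, (∀ p ∈ P, |⟪p, x⟫| ≤ 1) ∧ t = ‖x‖} := by
  have := hPfin.fintype
  set L : E N →ₗ[ℝ] (P → ℝ) := LinearMap.pi fun p => innerₛₗ ℝ (p : E N)
  have hker : LinearMap.ker L = ⊥ := by
    refine LinearMap.ker_eq_bot'.2 fun x hx => ?_
    by_contra hx0
    obtain ⟨p, hp, hpx⟩ := hEA.exists_inner_ne_zero hx0
    exact hpx (congrFun hx ⟨p, hp⟩)
  obtain ⟨K, -, hK⟩ := L.exists_antilipschitzWith hker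
  refine ⟨K, ?_⟩
  rintro t ⟨x, hx, rfl⟩
  have hLx : ‖L x‖ ≤ 1 :=
    (pi_norm_le_iff_of_nonneg zero_le_one).2 fun p => by simpa [L] using hx p p.2
  calc ‖x‖ ≤ K * ‖L x‖ := by simpa using hK.le_mul_dist x 0
    _ ≤ K := mul_le_of_le_one_right K.2 hLx

theorem one_le_sigma2 (hN : 1 ≤ N) (hP : IsRootSystem P) (hEA : CondEA P) : 1 ≤ sigma2 P := by
  obtain ⟨p₀, hp₀⟩ := hEA.nonempty hN
  refine le_csSup (bddAbove_sigma2 hP.1 hEA) ⟨p₀, fun p hp => ?_, (hP.2.1 p₀ hp₀).symm⟩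
  simpa [hP.2.1 p hp, hP.2.1 p₀ hp₀] using abs_real_inner_le_norm p p₀

theorem norm_le_sigma2_mul (hP : IsRootSystem P) (hEA : CondEA P) {x : E N} {M : ℝ}
    (hM : 0 < M) (hx : ∀ p ∈ P, ⟪p, x⟫ ≤ M) : ‖x‖ ≤ sigma2 P * M := by
  have hfeas : ∀ p ∈ P, |⟪p, M⁻¹ • x⟫| ≤ 1 := fun p hp => by
    have hneg := hx (-p) (hP.neg_mem hp)
    rw [inner_neg_left] at hneg
    rw [real_inner_smul_right, abs_mul, abs_inv, abs_of_pos hM, inv_mul_le_one₀ hM]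
    exact abs_le.2 ⟨by linarith, hx p hp⟩
  have := le_csSup (bddAbove_sigma2 hP.1 hEA) ⟨M⁻¹ • x, hfeas, rfl⟩
  rwa [norm_smul, norm_inv, Real.norm_of_nonneg hM.le, inv_mul_le_iff₀ hM, mul_comm] at this

def minAbsInnerSet (P : Set (E N)) (p : E N) : Set ℝ :=
  {t | ∃ v : Fin N → E N, BasisIn P v ∧ t = sInf (range fun i => |⟪v i, p⟫|)}

theorem minAbsInnerSet_finite (hN : 1 ≤ N) (hPfin : P.Finite) (p : E N) :
    (minAbsInnerSet P p).Finite := by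
  have : Nonempty (Fin N) := ⟨⟨0, hN⟩⟩
  refine (hPfin.image fun q => |⟪q, p⟫|).subset ?_
  rintro t ⟨v, hv, rfl⟩
  obtain ⟨i, hi⟩ := exists_eq_ciInf_of_finite (f := fun i => |⟪v i, p⟫|)
  exact ⟨v i, hv.1 i, hi⟩

theorem minAbsInnerSet_nonempty (hN : 1 ≤ N) (hEA : CondEA P) (p : E N) :
    (minAbsInnerSet P p).Nonempty := by
  obtain ⟨b, hb⟩ := exists_basis_forall_mem (hEA.span_eq_top hN)
  exact ⟨_, b, b.basisIn hb, rfl⟩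

theorem sigma1_le_sSup_minAbsInnerSet {p : E N} (hp : p ∈ P) :
    sigma1 P ≤ sSup (minAbsInnerSet P p) := by
  refine csInf_le ⟨0, ?_⟩ ⟨p, hp, rfl⟩
  rintro _ ⟨q, -, rfl⟩
  refine Real.sSup_nonneg ?_
  rintro _ ⟨v, -, rfl⟩
  exact Real.sInf_nonneg (by rintro _ ⟨i, rfl⟩; positivity)

theorem exists_basisIn_sigma1_le_abs_inner (hN : 1 ≤ N) (hPfin : P.Finite) (hEA : CondEA P)
    {p : E N} (hp : p ∈ P) : ∃ v : Fin N → E N, BasisIn P v ∧ ∀ i, sigma1 P ≤ |⟪v i, p⟫| := by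
  obtain ⟨v, hv, heq⟩ := (minAbsInnerSet_nonempty hN hEA p).csSup_mem
    (minAbsInnerSet_finite hN hPfin p)
  refine ⟨v, hv, fun i => (sigma1_le_sSup_minAbsInnerSet hp).trans ?_⟩
  rw [heq]
  exact csInf_le (finite_range _).bddBelow ⟨i, rfl⟩

theorem sigma1_le_one (hN : 1 ≤ N) (hP : IsRootSystem P) (hEA : CondEA P) : sigma1 P ≤ 1 := by
  obtain ⟨p, hp⟩ := hEA.nonempty hN
  obtain ⟨v, hv, hσ⟩ := exists_basisIn_sigma1_le_abs_inner hN hP.1 hEA hp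
  refine (hσ ⟨0, hN⟩).trans ?_
  simpa [hP.2.1 _ (hv.1 _), hP.2.1 p hp] using abs_real_inner_le_norm (v ⟨0, hN⟩) p

theorem sigma1_pos (hN : 1 ≤ N) (hP : IsRootSystem P) (hEA : CondEA P) : 0 < sigma1 P := by
  have : Nonempty (Fin N) := ⟨⟨0, hN⟩⟩
  obtain ⟨q, hq, hσ⟩ : sigma1 P ∈ {s | ∃ p ∈ P, s = sSup (minAbsInnerSet P p)} := by
    refine Nonempty.csInf_mem ?_ ((hP.1.image fun p => sSup (minAbsInnerSet P p)).subset ?_)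
    · obtain ⟨p, hp⟩ := hEA.nonempty hN
      exact ⟨_, p, hp, rfl⟩
    · rintro _ ⟨p, hp, rfl⟩
      exact ⟨p, hp, rfl⟩
  have hq0 : q ≠ 0 := fun h => by simpa [h] using hP.2.1 q hq
  obtain ⟨b, hb⟩ := exists_basis_forall_mem (hEA q hq0)
  obtain ⟨i, hi⟩ := exists_eq_ciInf_of_finite (f := fun i => |⟪b i, q⟫|)
  have hmem : |⟪b i, q⟫| ∈ minAbsInnerSet P q :=
    ⟨b, b.basisIn fun j => (hb j).1, hi⟩
  rw [hσ]
  exact (abs_pos.2 (hb i).2).trans_le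
    (le_csSup (minAbsInnerSet_finite hN hP.1 q).bddAbove hmem)

end Sigma

section Covering

variable {P : Set (E N)}

theorem IsRootSystem.mem_span_setOf_mul_le_inner (hP : IsRootSystem P) {p₁ x : E N}
    (hp₁ : p₁ ∈ P) (hM : 0 ≤ ⟪p₁, x⟫) {κ : ℝ} (hκ : κ ≤ 1) {q : E N} (hq : q ∈ P)
    (hqp₁ : κ ≤ ⟪q, p₁⟫) : q ∈ Submodule.span ℝ {q | q ∈ P ∧ κ * ⟪p₁, x⟫ ≤ ⟪q, x⟫} := by
  set G := {q | q ∈ P ∧ κ * ⟪p₁, x⟫ ≤ ⟪q, x⟫}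
  by_cases hqx : κ * ⟪p₁, x⟫ ≤ ⟪q, x⟫
  · exact Submodule.subset_span ⟨hq, hqx⟩
  -- otherwise the root `2⟪q, p₁⟫ p₁ - q` lies in `G`, and so does `p₁`
  set g := (2 * ⟪q, p₁⟫) • p₁ - q
  have hgP : g ∈ P := by
    have : g = -reflect0 p₁ q := by simp only [g, reflect0, reflect, sub_zero]; abel
    exact this ▸ hP.neg_mem (hP.reflect0_mem hp₁ hq)
  have hgx : κ * ⟪p₁, x⟫ ≤ ⟪g, x⟫ := by
    simp only [g, inner_sub_left, real_inner_smul_left]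
    nlinarith
  have hp₁G : p₁ ∈ G := ⟨hp₁, mul_le_of_le_one_left hM hκ⟩
  have : q = (2 * ⟪q, p₁⟫) • p₁ - g := by simp only [g]; abel
  rw [this]
  exact Submodule.sub_mem _ (Submodule.smul_mem _ _ (Submodule.subset_span hp₁G))
    (Submodule.subset_span ⟨hgP, hgx⟩)

theorem span_setOf_sigma1_mul_le_inner_eq_top (hN : 1 ≤ N) (hP : IsRootSystem P)
    (hEA : CondEA P) {p₁ x : E N} (hp₁ : p₁ ∈ P) (hM : 0 ≤ ⟪p₁, x⟫) :
    Submodule.span ℝ {q | q ∈ P ∧ sigma1 P * ⟪p₁, x⟫ ≤ ⟪q, x⟫} = ⊤ := by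
  obtain ⟨v, hv, hσ⟩ := exists_basisIn_sigma1_le_abs_inner hN hP.1 hEA hp₁
  have hσ1 := sigma1_le_one hN hP hEA
  rw [eq_top_iff, ← hv.2.2, Submodule.span_le]
  rintro _ ⟨i, rfl⟩
  rcases le_or_gt 0 ⟪v i, p₁⟫ with h | h
  · exact hP.mem_span_setOf_mul_le_inner hp₁ hM hσ1 (hv.1 i) <| by
      simpa [abs_of_nonneg h] using hσ i
  · rw [← neg_neg (v i)]
    refine Submodule.neg_mem _ <| hP.mem_span_setOf_mul_le_inner hp₁ hM hσ1 (hP.neg_mem (hv.1 i)) ?_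
    simpa [abs_of_neg h, inner_neg_left] using hσ i

theorem span_setOf_le_inner_eq_top (hN : 1 ≤ N) (hP : IsRootSystem P) (hEA : CondEA P)
    {θ : ℝ} {x : E N} (hx : (sigma1 P)⁻¹ * sigma2 P * θ ≤ ‖x‖) :
    Submodule.span ℝ {q | q ∈ P ∧ θ ≤ ⟪q, x⟫} = ⊤ := by
  have hσ1 := sigma1_pos hN hP hEA
  have hσ2 : 0 < sigma2 P := zero_lt_one.trans_le (one_le_sigma2 hN hP hEA)
  rcases eq_or_ne x 0 with rfl | hx0
  · have hθ : θ ≤ 0 := by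
      rw [norm_zero, mul_comm, ← mul_assoc] at hx
      nlinarith [mul_pos hσ2 (inv_pos.2 hσ1)]
    simpa [hθ] using hEA.span_eq_top hN
  obtain ⟨p₁, hp₁, hmax⟩ := exists_max_image P (fun p => ⟪p, x⟫) hP.1 (hEA.nonempty hN)
  obtain ⟨p, hp, hpx⟩ := hP.exists_inner_pos hEA hx0
  have hM : 0 < ⟪p₁, x⟫ := hpx.trans_le (hmax p hp)
  have hθ : θ ≤ sigma1 P * ⟪p₁, x⟫ := by
    have := hx.trans (norm_le_sigma2_mul hP hEA hM hmax)
    rw [mul_comm _ (sigma2 P), mul_assoc, mul_le_mul_iff_right₀ hσ2, inv_mul_le_iff₀ hσ1] at this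
    exact this
  rw [eq_top_iff, ← span_setOf_sigma1_mul_le_inner_eq_top hN hP hEA hp₁ hM.le]
  exact Submodule.span_mono fun q hq => ⟨hq.1, hθ.trans hq.2⟩

end Covering

theorem outer_neighborhood_volume_general (N : ℕ) (hN : 1 ≤ N) (P : Set (E N))
    (hP : IsRootSystem P) (hEA : CondEA P) (ρ r R : ℝ)
    (hr : 0 < r) (hR : 0 < R) :
    ∃ c > 0, ∀ Ω : Set (E N), IsOpen Ω → ReflProp P ρ Ω →
      ball (0 : E N) ((sigma1 P)⁻¹ * sigma2 P * (ρ + 2 * r)) ⊆ Ω →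
      Ω ⊆ ball (0 : E N) R →
      ∀ s : ℝ, 0 < s → s < r →
        volume {x : E N | 0 < infDist x Ω ∧ infDist x Ω < s} ≤ ENNReal.ofReal (c * s) := by
  set 𝒜 := {A | A ⊆ P ∧ Submodule.span ℝ A = ⊤}
  have h𝒜 : 𝒜.Finite := hP.1.finite_subsets.subset fun A hA => hA.1
  have hk := fun A (hA : A ∈ 𝒜) =>
    exists_volume_outerNbhd_inter_le hN hP.2.1 hA.1 hA.2 ρ hr hR
  choose! k hk_pos hk using hk
  refine ⟨∑ A ∈ h𝒜.toFinset, k A, Finset.sum_pos (fun A hA => hk_pos A (h𝒜.mem_toFinset.1 hA))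
    ⟨P, h𝒜.mem_toFinset.2 ⟨subset_rfl, hEA.span_eq_top hN⟩⟩, ?_⟩
  intro Ω _ hRP hball hΩR s hs hsr
  have hcover : outerNbhd Ω s ⊆
      ⋃ A ∈ h𝒜.toFinset, outerNbhd Ω s ∩ {x | ∀ p ∈ A, ρ + 2 * r ≤ ⟪p, x⟫} := fun x hx => by
    have hxball : (sigma1 P)⁻¹ * sigma2 P * (ρ + 2 * r) ≤ ‖x‖ :=
      not_lt.1 fun h => notMem_of_mem_outerNbhd hx (hball (mem_ball_zero_iff.2 h))
    exact mem_iUnion₂.2 ⟨_, h𝒜.mem_toFinset.2 ⟨fun q hq => hq.1,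
      span_setOf_le_inner_eq_top hN hP hEA hxball⟩, hx, fun p hp => hp.2⟩
  calc volume (outerNbhd Ω s)
      ≤ ∑ A ∈ h𝒜.toFinset, volume (outerNbhd Ω s ∩ {x | ∀ p ∈ A, ρ + 2 * r ≤ ⟪p, x⟫}) :=
        (measure_mono hcover).trans (measure_biUnion_finset_le _ _)
    _ ≤ ∑ A ∈ h𝒜.toFinset, ENNReal.ofReal (k A * s) := Finset.sum_le_sum fun A hA =>
        hk A (h𝒜.mem_toFinset.1 hA) Ω hRP hΩR s hs hsr
    _ = ENNReal.ofReal ((∑ A ∈ h𝒜.toFinset, k A) * s) := by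
        rw [Finset.sum_mul, ENNReal.ofReal_sum_of_nonneg fun A hA =>
          mul_nonneg (hk_pos A (h𝒜.mem_toFinset.1 hA)).le hs.le]

/-- volume of the outer tubular neighborhood is linear in its width. -/
theorem outer_neighborhood_volume (N : ℕ) (hN : 1 ≤ N) (P : Set (E N))
    (hP : IsRootSystem P) (hEA : CondEA P) (ρ r R : ℝ) (hρ : 0 ≤ ρ)
    (hr : 0 < r) (hR : 0 < R) :
    ∃ c > 0, ∀ Ω : Set (E N), IsOpen Ω → ReflProp P ρ Ω →
      ball (0 : E N) ((sigma1 P)⁻¹ * sigma2 P * (ρ + 2 * r)) ⊆ Ω →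
      Ω ⊆ ball (0 : E N) R →
      ∀ s : ℝ, 0 < s → s < r →
        volume {x : E N | 0 < infDist x Ω ∧ infDist x Ω < s} ≤ ENNReal.ofReal (c * s) :=
  outer_neighborhood_volume_general N hN P hP hEA ρ r R hr hR
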